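/- Let α be a type, σ₁ σ₂ : Set α, and n : ℕ with n ≥ 1. Define the NFA M over α with state type Q = Unit ⊕ Unit ⊕ Fin n, writing q₁, q₂ for the Unit states and q₃ i for the Fin n states, start = {q₁}, accept = {q₃ ⟨n - 1, _⟩}, and steps: step q₁ a = {q₁} ∪ (if a ∈ σ₁ then {q₂} else ∅); step q₂ a = if a ∈ σ₂ then {q₃ 0} else ∅; step (q₃ i) a = if a ∈ σ₂ ∧ i.val + 1 < n then {q₃ ⟨i.val + 1, _⟩} else ∅. Then M.accepts = {w : List α | ∃ u c v, w = u ++ c :: v ∧ c ∈ σ₁ ∧ v.length = n ∧ ∀ x ∈ v, x ∈ σ₂}. -/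
import Mathlib


namespace Stmt16

variable {α : Type*}

/-- The state type of the counter automaton for `Σ* σ₁ σ₂{n}`. -/
abbrev Q (n : ℕ) := Unit ⊕ Unit ⊕ Fin n

def q₁ {n : ℕ} : Q n := Sum.inl ()
def q₂ {n : ℕ} : Q n := Sum.inr (Sum.inl ())
def q₃ {n : ℕ} (i : Fin n) : Q n := Sum.inr (Sum.inr i)

open Classical in
/-- The counter automaton for `Σ* σ₁ σ₂{n}`, with the counter values unfolded
into states: `q₃ i` is the token with counter value `i + 1`. -/
noncomputable def M (σ₁ σ₂ : Set α) (n : ℕ) [NeZero n] : NFA α (Q n) where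
  start := {q₁}
  accept := {q₃ ⟨n - 1, Nat.sub_lt (Nat.pos_of_ne_zero (NeZero.ne n)) one_pos⟩}
  step s a :=
    match s with
    | Sum.inl () => {q₁} ∪ (if a ∈ σ₁ then {q₂} else ∅)
    | Sum.inr (Sum.inl ()) => if a ∈ σ₂ then {q₃ 0} else ∅
    | Sum.inr (Sum.inr i) =>
        if h : a ∈ σ₂ ∧ i.val + 1 < n then {q₃ ⟨i.val + 1, h.2⟩} else ∅

lemma eval_eq (σ₁ σ₂ : Set α) (n : ℕ) [NeZero n] (w : List α) :
    (M σ₁ σ₂ n).eval w = {q | match q with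
      | Sum.inl _ => True
      | Sum.inr (Sum.inl _) => ∃ u c, w = u ++ [c] ∧ c ∈ σ₁
      | Sum.inr (Sum.inr i) => ∃ u c v, w = u ++ c :: v ∧ c ∈ σ₁ ∧
          v.length = i.val + 1 ∧ ∀ x ∈ v, x ∈ σ₂} := by
  induction w using List.reverseRecOn with
  | nil =>
    ext q
    rcases q with _ | _ | i
    · simp [NFA.eval, NFA.evalFrom, M, q₁]
    · simp [NFA.eval, NFA.evalFrom, M, q₁, q₂]
    · simp [NFA.eval, NFA.evalFrom, M, q₁, q₃]
  | append_singleton w a ih =>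
    rw [NFA.eval_append_singleton, ih]
    ext q
    rw [NFA.mem_stepSet]
    rcases q with _ | _ | i
    · simp only [Set.mem_setOf_eq, iff_true]
      exact ⟨q₁, trivial, by simp [M, q₁]⟩
    · show _ ↔ ∃ u c, w ++ [a] = u ++ [c] ∧ c ∈ σ₁
      constructor
      · rintro ⟨t, ht, hstep⟩
        rcases t with _ | _ | j
        · simp only [M, q₁, q₂] at hstep
          rcases hstep with h | h
          · simp at h
          · split_ifs at h with ha
            · exact ⟨w, a, rfl, ha⟩
            · simp at h
        · simp only [M, q₂, q₃] at hstep
          split_ifs at hstep <;> simp [q₂, q₃] at hstep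
        · simp only [M, q₂, q₃] at hstep
          split_ifs at hstep <;> simp [q₂, q₃] at hstep
      · rintro ⟨u, c, huc, hc⟩
        have := List.append_inj' huc rfl
        have hac : a = c := by simpa using this.2
        refine ⟨q₁, trivial, ?_⟩
        simp [M, q₁, hac.symm ▸ hc, q₂]
    · show _ ↔ ∃ u c v, w ++ [a] = u ++ c :: v ∧ c ∈ σ₁ ∧
          v.length = i.val + 1 ∧ ∀ x ∈ v, x ∈ σ₂
      constructor
      · rintro ⟨t, ht, hstep⟩
        rcases t with _ | _ | j
        · simp only [M, q₁] at hstep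
          rcases hstep with h | h
          · simp [q₃, q₁] at h
          · split_ifs at h <;> simp [q₃, q₂] at h
        · -- from q₂ : a ∈ σ₂, i = 0, and ht : ∃ u c, w = u ++ [c] ∧ c ∈ σ₁
          simp only [M] at hstep
          split_ifs at hstep with ha
          · simp only [q₃, Set.mem_singleton_iff, Sum.inr.injEq] at hstep
            obtain ⟨u, c, rfl, hc⟩ := ht
            refine ⟨u, c, [a], by simp, hc, ?_, ?_⟩
            · simp [hstep]
            · simpa using ha
          · simp at hstep
        · simp only [M] at hstep
          split_ifs at hstep with ha
          · simp only [q₃, Set.mem_singleton_iff, Sum.inr.injEq] at hstep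
            obtain ⟨u, c, v, rfl, hc, hv, hvσ⟩ := ht
            refine ⟨u, c, v ++ [a], by simp, hc, ?_, ?_⟩
            · simp [hv, hstep]
            · intro x hx
              rcases List.mem_append.mp hx with h | h
              · exact hvσ x h
              · simp at h; exact h ▸ ha.1
          · simp at hstep
      · rintro ⟨u, c, v, huv, hc, hv, hvσ⟩
        -- v nonempty
        rcases List.eq_nil_or_concat v with rfl | ⟨v', b, rfl⟩
        · simp at hv
        have : w ++ [a] = (u ++ c :: v') ++ [b] := by simpa using huv
        have h2 := List.append_inj' this rfl
        have hw : w = u ++ c :: v' := h2.1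
        have hab : a = b := by simpa using h2.2
        have hlen : v'.length = i.val := by simpa using hv
        have haσ : a ∈ σ₂ := hab ▸ hvσ b (by simp)
        have hv'σ : ∀ x ∈ v', x ∈ σ₂ := fun x hx => hvσ x (by simp [hx])
        rcases Nat.eq_zero_or_pos i.val with hi | hi
        · -- from q₂
          have hv' : v' = [] := List.length_eq_zero_iff.mp (by rw [hlen, hi])
          refine ⟨q₂, ⟨u, c, by simp [hw, hv'], hc⟩, ?_⟩
          simp only [M, q₂]
          rw [if_pos haσ]
          simp [q₃, Fin.ext_iff, hi]
        · -- from q₃ ⟨i-1⟩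
          have hj : i.val - 1 < n := lt_of_le_of_lt (Nat.sub_le _ _) i.isLt
          refine ⟨q₃ ⟨i.val - 1, hj⟩, ⟨u, c, v', hw, hc, by show v'.length = i.val - 1 + 1; omega, hv'σ⟩, ?_⟩
          simp only [M, q₃]
          rw [dif_pos ⟨haσ, by omega⟩]
          simp only [q₃, Set.mem_singleton_iff, Sum.inr.injEq]
          exact Fin.ext (by show i.val = i.val - 1 + 1; omega)

theorem stmt_16 (σ₁ σ₂ : Set α) (n : ℕ) [NeZero n] (hn : 1 ≤ n) :
    (M σ₁ σ₂ n).accepts =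
      {w : List α | ∃ (u : List α) (c : α) (v : List α),
        w = u ++ c :: v ∧ c ∈ σ₁ ∧ v.length = n ∧ ∀ x ∈ v, x ∈ σ₂} := by
  ext w
  have h : w ∈ (M σ₁ σ₂ n).accepts ↔
      q₃ ⟨n - 1, Nat.sub_lt (Nat.pos_of_ne_zero (NeZero.ne n)) one_pos⟩ ∈ (M σ₁ σ₂ n).eval w := by
    constructor
    · rintro ⟨s, hs, hev⟩
      have : s = q₃ ⟨n - 1, _⟩ := hs
      exact this ▸ hev
    · intro h
      exact ⟨_, rfl, h⟩
  rw [h, eval_eq]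
  show (∃ u c v, w = u ++ c :: v ∧ c ∈ σ₁ ∧ v.length = n - 1 + 1 ∧ ∀ x ∈ v, x ∈ σ₂) ↔ _
  have : n - 1 + 1 = n := by omega
  rw [this]
  rfl

end Stmt16
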